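/- arXiv:1605.05807 — 3 statements merged into one kernel-verified Lean document; each statement's English description precedes it below -/
import Mathlib

section
/- Let T = ⟨P, 𝒢, O⟩ be a plan-recognition theory with O = o_1,…,o_m pairwise distinct, let P' be the transformed domain, and let G ∈ 𝒢 with G' = G ∪ F_o. Then π = a_1,…,a_n is a plan for G in P that satisfies the observation sequence O under the strictly monotonic function f if and only if π' = b_1,…,b_n is a plan for G' in P', where b_i = o_{a_i} if i = f(j) for some j ∈ {1,…,m}, and b_i = a_i otherwise. -/
/-- A STRIPS planning domain: fluents `F`, actions `A`, an initial state `I`,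
and precondition/add/delete lists for each action.  A planning problem is
obtained by pairing a domain with a goal `G : Set F`. -/
structure Strips (F A : Type) where
  I : Set F
  pre : A → Set F
  add : A → Set F
  del : A → Set F

namespace Strips

variable {F A : Type}

/-- The result of applying action `a` in state `s`: `(s \ Del(a)) ∪ Add(a)`. -/
def applyA (P : Strips F A) (s : Set F) (a : A) : Set F := (s \ P.del a) ∪ P.add a

/-- `Exec P s π t`: the action sequence `π` is applicable successively from
state `s` (each action's precondition holds when it is applied) and leads to
the state `t`. -/
inductive Exec (P : Strips F A) : Set F → List A → Set F → Prop
  | nil (s : Set F) : Exec P s [] s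
  | cons {s t : Set F} {a : A} {π : List A} :
      P.pre a ⊆ s → Exec P (P.applyA s a) π t → Exec P s (a :: π) t

/-- `π` is a plan for the goal `G` in the domain `P`: it is applicable
successively from the initial state and its final state contains `G`. -/
def IsPlan (P : Strips F A) (G : Set F) (π : List A) : Prop :=
  ∃ t, Exec P P.I π t ∧ G ⊆ t

/-- The cost of a plan: the sum of the costs of its actions. -/
def planCost (c : A → ℝ) (π : List A) : ℝ := (π.map c).sum

/-- An optimal plan for `G`: a plan for `G` of minimum cost among all plans for `G`. -/
def IsOptimalPlan (P : Strips F A) (c : A → ℝ) (G : Set F) (π : List A) : Prop :=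
  P.IsPlan G π ∧ ∀ π', P.IsPlan G π' → planCost c π ≤ planCost c π'

/-- `c*_P(G)`: the optimal (minimum) cost of achieving `G` in `P`. -/
noncomputable def cstar (P : Strips F A) (c : A → ℝ) (G : Set F) : ℝ :=
  sInf (planCost c '' {π | P.IsPlan G π})

/-- An action sequence `π` satisfies the observation sequence `O` iff there is a
strictly monotonic function `f` from observation indices into action indices
such that the `f j`-th action of `π` equals the `j`-th observation. -/
def Satisfies (π O : List A) : Prop :=
  ∃ f : Fin O.length → Fin π.length, StrictMono f ∧ ∀ j, π.get (f j) = O.get j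

end Strips

/-- The transformed domain `P'` of a plan-recognition theory `⟨P, 𝒢, O⟩`:
fluents `F' = F ⊕ Fin m` (the fluent `Sum.inr j` is `p_{o_j}`), actions
`A' = A ⊕ Fin m` (the action `Sum.inr j` is the new action `o_{o_j}`),
initial state `I' = I`.  The new action `o_{o_j}` has the same precondition,
add and delete lists as the observed action `o_j = O.get j`, except that
`p_{o_j}` is added to its add list and `p_{o_{j-1}}` (for the observation
immediately preceding `o_j` in `O`, if any, i.e. when `j > 0`) is added to its
precondition. -/
def Strips.transform (P : Strips F A) (O : List A) :
    Strips (F ⊕ Fin O.length) (A ⊕ Fin O.length) where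
  I := Sum.inl '' P.I
  pre := fun x => match x with
    | Sum.inl a => Sum.inl '' P.pre a
    | Sum.inr j => Sum.inl '' P.pre (O.get j) ∪
        {p | ∃ _ : 0 < (j : ℕ), p = Sum.inr
          (⟨(j : ℕ) - 1, Nat.lt_of_le_of_lt (Nat.sub_le _ _) j.isLt⟩ : Fin O.length)}
  add := fun x => match x with
    | Sum.inl a => Sum.inl '' P.add a
    | Sum.inr j => insert (Sum.inr j) (Sum.inl '' P.add (O.get j))
  del := fun x => match x with
    | Sum.inl a => Sum.inl '' P.del a
    | Sum.inr j => Sum.inl '' P.del (O.get j)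

/-- The set `F_o` of new fluents `p_a`, `a ∈ O`, of the transformed domain. -/
def obsFluents {F : Type} (O : List A) : Set (F ⊕ Fin O.length) := Set.range Sum.inr

/-- The transformed goal `G' = G ∪ F_o`. -/
def goalTransform {F : Type} (O : List A) (G : Set F) : Set (F ⊕ Fin O.length) :=
  Sum.inl '' G ∪ Set.range Sum.inr

/-- The cost function of the transformed domain: `c(o_a) = c(a)`. -/
def costTransform (c : A → ℝ) (O : List A) : A ⊕ Fin O.length → ℝ :=
  Sum.elim c (fun j => c (O.get j))

/-!
Run `π` and `π'` in lockstep. Writing `p_j` for `p_{o_j}`: if `π` is in state `s` after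
its first `i` actions, of which `o_0, …, o_{k-1}` are observations, then `π'` is in state
`s ∪ {p_0, …, p_{k-1}}`. Ordinary actions act on the `F`-part only, and `o_{o_k}` acts like
`o_k` and adds `p_k`, while its extra precondition `p_{k-1}` is already present. Hence the two
executions succeed together, and in the end all of `F_o` holds, so `G'` is reached iff `G` is.
-/

namespace Strips

variable {F A : Type}

/-- The state of the transformed domain corresponding to the state `s` of `P` once the first `k`
observations have been made. -/
def obsState {m : ℕ} (k : ℕ) (s : Set F) : Set (F ⊕ Fin m) :=
  Sum.inl '' s ∪ Sum.inr '' {j : Fin m | (j : ℕ) < k}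

section obsState

variable {m k : ℕ} {s : Set F}

@[simp]
theorem inl_mem_obsState {x : F} : Sum.inl x ∈ obsState (m := m) k s ↔ x ∈ s := by
  simp [obsState]

@[simp]
theorem inr_mem_obsState {j : Fin m} : Sum.inr j ∈ obsState (m := m) k s ↔ (j : ℕ) < k := by
  simp [obsState]

theorem image_inl_subset_obsState_iff {u : Set F} :
    Sum.inl '' u ⊆ obsState (m := m) k s ↔ u ⊆ s := by
  simp [Set.subset_def]

theorem obsState_zero (s : Set F) : obsState (m := m) 0 s = Sum.inl '' s := by
  simp [obsState]

theorem obsState_diff_union_image_inl (d a : Set F) :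
    obsState (m := m) k s \ Sum.inl '' d ∪ Sum.inl '' a = obsState k (s \ d ∪ a) := by
  ext (x | j) <;> simp

theorem obsState_succ (j : Fin m) (s : Set F) :
    obsState (j + 1) s = insert (Sum.inr j) (obsState (j : ℕ) s) := by
  ext (x | i)
  · simp
  · simp only [inr_mem_obsState, Set.mem_insert_iff, Sum.inr.injEq, Fin.ext_iff]
    omega

end obsState

theorem exec_nil_iff {P : Strips F A} {s t : Set F} : Exec P s [] t ↔ t = s :=
  ⟨fun h => by cases h; rfl, fun h => by subst h; exact Exec.nil t⟩

theorem exec_cons_iff {P : Strips F A} {s t : Set F} {a : A} {π : List A} :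
    Exec P s (a :: π) t ↔ P.pre a ⊆ s ∧ Exec P (P.applyA s a) π t :=
  ⟨fun h => by cases h with | cons h₁ h₂ => exact ⟨h₁, h₂⟩,
    fun h => Exec.cons h.1 h.2⟩

section transform

variable (P : Strips F A) (O : List A) (k : ℕ) (s : Set F)

theorem transform_I : (P.transform O).I = obsState 0 P.I :=
  (obsState_zero P.I).symm

theorem transform_pre_inl_subset_iff (a : A) :
    (P.transform O).pre (Sum.inl a) ⊆ obsState k s ↔ P.pre a ⊆ s :=
  image_inl_subset_obsState_iff

theorem transform_pre_inr_subset_iff (j : Fin O.length) :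
    (P.transform O).pre (Sum.inr j) ⊆ obsState j s ↔ P.pre (O.get j) ⊆ s := by
  simp only [transform, Set.union_subset_iff, image_inl_subset_obsState_iff, and_iff_left_iff_imp]
  rintro - _ ⟨hj, rfl⟩
  simpa using Nat.sub_one_lt_of_lt hj

theorem transform_applyA_inl (a : A) :
    (P.transform O).applyA (obsState k s) (Sum.inl a) = obsState k (P.applyA s a) :=
  obsState_diff_union_image_inl _ _

theorem transform_applyA_inr (j : Fin O.length) :
    (P.transform O).applyA (obsState j s) (Sum.inr j) =
      obsState (j + 1) (P.applyA s (O.get j)) := by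
  simp only [applyA, transform, Set.union_insert, obsState_diff_union_image_inl, obsState_succ]

theorem goalTransform_subset_obsState_iff (G : Set F) :
    goalTransform O G ⊆ obsState O.length s ↔ G ⊆ s := by
  simp only [goalTransform, Set.union_subset_iff, image_inl_subset_obsState_iff,
    Set.range_subset_iff, inr_mem_obsState, Fin.is_lt, implies_true, and_true]

end transform

/-- `ObsTagging O k π π'`: `π'` is `π` with its actions, from left to right, either kept as
`inl a` or replaced by the observation actions `o_{o_k}, o_{o_{k+1}}, …, o_{o_{m-1}}`, in this
order and each exactly once. -/
inductive ObsTagging (O : List A) : ℕ → List A → List (A ⊕ Fin O.length) → Prop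
  | nil : ObsTagging O O.length [] []
  | keep {k : ℕ} {π π'} (a : A) :
      ObsTagging O k π π' → ObsTagging O k (a :: π) (Sum.inl a :: π')
  | observe {π π'} (j : Fin O.length) :
      ObsTagging O (j + 1) π π' → ObsTagging O j (O.get j :: π) (Sum.inr j :: π')

theorem ObsTagging.exec_transform_iff {P : Strips F A} {O : List A} {k : ℕ} {π : List A}
    {π' : List (A ⊕ Fin O.length)} (h : ObsTagging O k π π') (s : Set F)
    (t' : Set (F ⊕ Fin O.length)) :
    Exec (P.transform O) (obsState k s) π' t' ↔
      ∃ t, t' = obsState O.length t ∧ Exec P s π t := by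
  induction h generalizing s with
  | nil => simp [exec_nil_iff]
  | keep a _ ih =>
    simp only [exec_cons_iff, transform_pre_inl_subset_iff, transform_applyA_inl, ih]
    grind
  | observe j _ ih =>
    simp only [exec_cons_iff, transform_pre_inr_subset_iff, transform_applyA_inr, ih]
    grind

/-- `hik` says that the observations among the first `i` actions of `π` are exactly the `o_j`,
`j < k`. -/
theorem obsTagging_drop_of_strictMono {O π : List A} {π' : List (A ⊕ Fin O.length)}
    (f : Fin O.length → Fin π.length) (hf : StrictMono f) (hsat : ∀ j, π.get (f j) = O.get j)
    (hlen : π'.length = π.length)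
    (hin : ∀ j : Fin O.length, π'.get (Fin.cast hlen.symm (f j)) = Sum.inr j)
    (hout : ∀ i : Fin π.length, (∀ j, f j ≠ i) →
      π'.get (Fin.cast hlen.symm i) = Sum.inl (π.get i))
    (i k : ℕ) (hi : i ≤ π.length) (hk : k ≤ O.length)
    (hik : ∀ j : Fin O.length, (f j : ℕ) < i ↔ (j : ℕ) < k) :
    ObsTagging O k (π.drop i) (π'.drop i) := by
  obtain rfl | hi := hi.eq_or_lt
  · obtain rfl : k = O.length :=
      hk.antisymm (not_lt.1 fun hk' => by simpa using (hik ⟨k, hk'⟩).1 (f _).isLt)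
    rw [List.drop_length, ← hlen, List.drop_length]
    exact .nil
  rw [List.drop_eq_getElem_cons hi, List.drop_eq_getElem_cons (hlen.symm ▸ hi : i < π'.length)]
  by_cases hobs : ∃ j, (f j : ℕ) = i
  · obtain ⟨j, hj⟩ := hobs
    obtain rfl : (j : ℕ) = k := by
      refine le_antisymm (not_lt.1 fun hkj => ?_) (not_lt.1 fun hjk => ?_)
      · have : (f ⟨k, hkj.trans j.isLt⟩ : ℕ) < f j := hf hkj
        exact ((hik _).1 (hj ▸ this)).false
      · exact (hik j).2 hjk |>.ne hj
    have hπ : π[i] = O.get j := by simpa [← hj] using hsat j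
    have hπ' : π'[i] = Sum.inr j := by simpa [← hj] using hin j
    rw [hπ, hπ']
    refine .observe j (obsTagging_drop_of_strictMono f hf hsat hlen hin hout (i + 1) (j + 1) hi
      j.isLt fun j' => ?_)
    rw [Nat.lt_succ_iff, Nat.lt_succ_iff, ← hj, Fin.val_fin_le, hf.le_iff_le, Fin.val_fin_le]
  · push Not at hobs
    have hπ' : π'[i] = Sum.inl π[i] := by
      simpa using hout ⟨i, hi⟩ fun j h => hobs j (by rw [h])
    rw [hπ']
    refine .keep _ (obsTagging_drop_of_strictMono f hf hsat hlen hin hout (i + 1) k hi hk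
      fun j => ?_)
    rw [← hik j]
    have := hobs j
    omega
termination_by π.length - i

end Strips

theorem plan_satisfying_obs_iff_transformed_plan_general
    {F A : Type}
    (P : Strips F A) (O : List A)
    (G : Set F)
    (π : List A) (f : Fin O.length → Fin π.length)
    (hf : StrictMono f) (hsat : ∀ j, π.get (f j) = O.get j)
    (π' : List (A ⊕ Fin O.length)) (hlen : π'.length = π.length)
    (hin : ∀ j : Fin O.length, π'.get (Fin.cast hlen.symm (f j)) = Sum.inr j)
    (hout : ∀ i : Fin π.length, (∀ j, f j ≠ i) →
      π'.get (Fin.cast hlen.symm i) = Sum.inl (π.get i)) :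
    P.IsPlan G π ↔ (P.transform O).IsPlan (goalTransform O G) π' := by
  have htag : Strips.ObsTagging O 0 π π' := by
    simpa using Strips.obsTagging_drop_of_strictMono f hf hsat hlen hin hout 0 0 (Nat.zero_le _)
      (Nat.zero_le _) (by simp)
  simp only [Strips.IsPlan, Strips.transform_I, htag.exec_transform_iff]
  constructor
  · rintro ⟨t, ht, hG⟩
    exact ⟨_, ⟨t, rfl, ht⟩, (Strips.goalTransform_subset_obsState_iff O t G).2 hG⟩
  · rintro ⟨_, ⟨t, rfl, ht⟩, hG⟩
    exact ⟨t, ht, (Strips.goalTransform_subset_obsState_iff O t G).1 hG⟩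

/-- Proposition 1: let `T = ⟨P, 𝒢, O⟩` be a plan-recognition
theory (`F`, `A` finite, `O` pairwise distinct), `P' = P.transform O` the
transformed domain, `G ∈ 𝒢`, and `G' = G ∪ F_o`.  Let `π = a_1,…,a_n` be an
action sequence that satisfies `O` under the strictly monotonic function `f`
(hypotheses `hf`, `hsat`), and let `π' = b_1,…,b_n` be the sequence with
`b_i = o_{a_i}` if `i = f j` for some `j` (hypothesis `hin`), and `b_i = a_i`
otherwise (hypothesis `hout`).  Then `π` is a plan for `G` in `P` iff `π'` is
a plan for `G'` in `P'`. -/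
theorem plan_satisfying_obs_iff_transformed_plan
    {F A : Type} [Finite F] [Finite A]
    (P : Strips F A) (𝒢 : Set (Set F)) (O : List A) (hO : O.Nodup)
    (G : Set F) (hG : G ∈ 𝒢)
    (π : List A) (f : Fin O.length → Fin π.length)
    (hf : StrictMono f) (hsat : ∀ j, π.get (f j) = O.get j)
    (π' : List (A ⊕ Fin O.length)) (hlen : π'.length = π.length)
    (hin : ∀ j : Fin O.length, π'.get (Fin.cast hlen.symm (f j)) = Sum.inr j)
    (hout : ∀ i : Fin π.length, (∀ j, f j ≠ i) →
      π'.get (Fin.cast hlen.symm i) = Sum.inl (π.get i)) :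
    P.IsPlan G π ↔ (P.transform O).IsPlan (goalTransform O G) π' :=
  plan_satisfying_obs_iff_transformed_plan_general P O G π f hf hsat π' hlen hin hout
end

section
/- Let T = ⟨P, 𝒢, O⟩ be a plan-recognition theory with O = o_1,…,o_m pairwise distinct, and let P' be the transformed domain. In every plan π' for the goal G' = G ∪ F_o in P', each of the new actions o_{o_1},…,o_{o_m} occurs, and for every j < k, every occurrence of o_{o_k} comes after some occurrence of o_{o_j}; in particular the actions o_{o_1},…,o_{o_m} occur in π' in the order of O. -/
/-! The fluent `p_{o_k}` does not hold initially and is added only by `o_{o_k}`, so a plan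
that reaches `p_{o_k}` contains `o_{o_k}`. The precondition `p_{o_{k-1}}` of `o_{o_k}` then forces
an occurrence of `o_{o_{k-1}}` strictly before each occurrence of `o_{o_k}`; iterating this down
to `j` gives every `o_{o_j}`, `j < k`, before it. -/

namespace Strips

variable {F A : Type} {P : Strips F A}

theorem Exec.exists_of_append {s t : Set F} {l₁ l₂ : List A} (h : P.Exec s (l₁ ++ l₂) t) :
    ∃ u, P.Exec s l₁ u ∧ P.Exec u l₂ t := by
  induction l₁ generalizing s with
  | nil => exact ⟨s, .nil s, h⟩
  | cons a l ih =>
    cases h with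
    | cons hpre hrest =>
      obtain ⟨u, hl, hu⟩ := ih hrest
      exact ⟨u, .cons hpre hl, hu⟩

theorem Exec.exists_pre_subset_of_append_cons {s t : Set F} {l₁ l₂ : List A} {a : A}
    (h : P.Exec s (l₁ ++ a :: l₂) t) : ∃ u, P.Exec s l₁ u ∧ P.pre a ⊆ u := by
  obtain ⟨u, hl₁, hu⟩ := h.exists_of_append
  cases hu with
  | cons hpre _ => exact ⟨u, hl₁, hpre⟩

theorem Exec.mem_or_exists_mem_add {s t : Set F} {π : List A} (h : P.Exec s π t) {p : F}
    (hp : p ∈ t) : p ∈ s ∨ ∃ a ∈ π, p ∈ P.add a := by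
  induction h with
  | nil => exact .inl hp
  | @cons s t a π _ _ ih =>
    rcases ih hp with (⟨hs, _⟩ | hadd) | ⟨b, hb, hadd⟩
    · exact .inl hs
    · exact .inr ⟨a, List.mem_cons_self, hadd⟩
    · exact .inr ⟨b, List.mem_cons_of_mem a hb, hadd⟩

variable {O : List A}

theorem inr_notMem_transform_I (m : Fin O.length) : Sum.inr m ∉ (P.transform O).I := by
  simp [transform]

theorem eq_inr_of_inr_mem_transform_add {x : A ⊕ Fin O.length} {m : Fin O.length}
    (h : Sum.inr m ∈ (P.transform O).add x) : x = Sum.inr m := by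
  cases x with
  | inl a => simp [transform] at h
  | inr j => simp_all [transform]

theorem pred_mem_transform_pre {k : ℕ} (hk : k < O.length) (hk₀ : 0 < k) :
    (Sum.inr ⟨k - 1, by omega⟩ : F ⊕ Fin O.length) ∈ (P.transform O).pre (Sum.inr ⟨k, hk⟩) :=
  .inr ⟨hk₀, rfl⟩

theorem Exec.inr_mem_of_transform {π : List (A ⊕ Fin O.length)} {t : Set (F ⊕ Fin O.length)}
    (h : (P.transform O).Exec (P.transform O).I π t) {m : Fin O.length} (hm : Sum.inr m ∈ t) :
    Sum.inr m ∈ π := by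
  rcases h.mem_or_exists_mem_add hm with hI | ⟨a, ha, hadd⟩
  · exact absurd hI (inr_notMem_transform_I m)
  · rwa [← eq_inr_of_inr_mem_transform_add hadd]

theorem Exec.pred_mem_of_transform {l₁ l₂ : List (A ⊕ Fin O.length)}
    {t : Set (F ⊕ Fin O.length)} {k : ℕ} {hk : k < O.length}
    (h : (P.transform O).Exec (P.transform O).I (l₁ ++ Sum.inr ⟨k, hk⟩ :: l₂) t) (hk₀ : 0 < k) :
    Sum.inr ⟨k - 1, by omega⟩ ∈ l₁ := by
  obtain ⟨u, hl₁, hpre⟩ := h.exists_pre_subset_of_append_cons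
  exact hl₁.inr_mem_of_transform (hpre (pred_mem_transform_pre hk hk₀))

theorem Exec.inr_mem_of_le_of_transform {π : List (A ⊕ Fin O.length)}
    {t : Set (F ⊕ Fin O.length)} (h : (P.transform O).Exec (P.transform O).I π t) :
    ∀ (k : ℕ) (hk : k < O.length), Sum.inr ⟨k, hk⟩ ∈ π →
      ∀ j : Fin O.length, (j : ℕ) ≤ k → Sum.inr j ∈ π
  | 0, hk, hmem, j, hj => by rwa [show j = ⟨0, hk⟩ from Fin.ext (Nat.le_zero.mp hj)]
  | k + 1, hk, hmem, j, hj => by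
    rcases Nat.lt_or_eq_of_le hj with hj | hj
    · obtain ⟨l₁, l₂, rfl⟩ := List.append_of_mem hmem
      have hpred : Sum.inr ⟨k, by omega⟩ ∈ l₁ ++ Sum.inr ⟨k + 1, hk⟩ :: l₂ :=
        List.mem_append_left _ (h.pred_mem_of_transform k.succ_pos)
      exact h.inr_mem_of_le_of_transform k _ hpred j (Nat.le_of_lt_succ hj)
    · rwa [show j = ⟨k + 1, hk⟩ from Fin.ext hj]

theorem Exec.inr_mem_prefix_of_lt_of_transform {l₁ l₂ : List (A ⊕ Fin O.length)}
    {t : Set (F ⊕ Fin O.length)} {j k : Fin O.length}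
    (h : (P.transform O).Exec (P.transform O).I (l₁ ++ Sum.inr k :: l₂) t) (hjk : j < k) :
    Sum.inr j ∈ l₁ := by
  have hpred := h.pred_mem_of_transform (k := k) (by omega)
  obtain ⟨u, hl₁, -⟩ := h.exists_of_append
  exact hl₁.inr_mem_of_le_of_transform _ _ hpred j (by omega)

end Strips

theorem transformed_plan_contains_obs_actions_in_order_general
    {F A : Type}
    (P : Strips F A) (O : List A)
    (G : Set F)
    (π' : List (A ⊕ Fin O.length))
    (hπ' : (P.transform O).IsPlan (goalTransform O G) π') :
    (∀ j : Fin O.length, Sum.inr j ∈ π') ∧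
    (∀ j k : Fin O.length, j < k →
      ∀ i₂ : Fin π'.length, π'.get i₂ = Sum.inr k →
        ∃ i₁ : Fin π'.length, i₁ < i₂ ∧ π'.get i₁ = Sum.inr j) := by
  obtain ⟨t, hexec, hgoal⟩ := hπ'
  refine ⟨fun j => hexec.inr_mem_of_transform (hgoal (.inr ⟨j, rfl⟩)), ?_⟩
  intro j k hjk i₂ hi₂
  have hsplit : π' = π'.take i₂ ++ Sum.inr k :: π'.drop (i₂ + 1) := by
    rw [← hi₂, List.get_eq_getElem, List.getElem_cons_drop, List.take_append_drop]
  rw [hsplit] at hexec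
  obtain ⟨n, hn, hget⟩ :=
    List.mem_take_iff_getElem.mp (hexec.inr_mem_prefix_of_lt_of_transform hjk)
  exact ⟨⟨n, by omega⟩, Fin.mk_lt_mk.mpr (by omega), hget⟩

/-- let `T = ⟨P, 𝒢, O⟩` be a plan-recognition theory with `O`
pairwise distinct and `P' = P.transform O` the transformed domain.  In every
plan `π'` for the goal `G' = G ∪ F_o` in `P'`, each new action `o_{o_j}`
(i.e. `Sum.inr j`) occurs, and for `j < k` every occurrence of `o_{o_k}`
comes after some occurrence of `o_{o_j}`; in particular the new actions occur
in `π'` in the order of `O`. -/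
theorem transformed_plan_contains_obs_actions_in_order
    {F A : Type} [Finite F] [Finite A]
    (P : Strips F A) (𝒢 : Set (Set F)) (O : List A) (hO : O.Nodup)
    (G : Set F) (hG : G ∈ 𝒢)
    (π' : List (A ⊕ Fin O.length))
    (hπ' : (P.transform O).IsPlan (goalTransform O G) π') :
    (∀ j : Fin O.length, Sum.inr j ∈ π') ∧
    (∀ j k : Fin O.length, j < k →
      ∀ i₂ : Fin π'.length, π'.get i₂ = Sum.inr k →
        ∃ i₁ : Fin π'.length, i₁ < i₂ ∧ π'.get i₁ = Sum.inr j) :=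
  transformed_plan_contains_obs_actions_in_order_general P O G π' hπ'
end

section
/- Let T = ⟨P, 𝒢, O⟩ be a plan-recognition theory with O pairwise distinct, P' the transformed domain with c(o_a) = c(a), and G ∈ 𝒢 a goal that is solvable in P. Then G belongs to the optimal goal set 𝒢*_T if and only if the goal G' = G ∪ F_o is solvable in P' and c*_{P'}(G) = c*_{P'}(G'), where c*_{P'}(H) denotes the optimal (minimum) cost of achieving H in P'. -/
namespace Strips

variable {F A : Type} {P : Strips F A} {c : A → ℝ} {G H : Set F} {π : List A}

theorem planCost_comp {B : Type} (f : B → A) (ρ : List B) :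
    planCost (c ∘ f) ρ = planCost c (ρ.map f) := by
  simp only [planCost, List.map_map]

theorem planCost_nonneg (hc : ∀ a, 0 ≤ c a) (π : List A) : 0 ≤ planCost c π :=
  List.sum_nonneg fun _ hx => by
    obtain ⟨a, -, rfl⟩ := List.mem_map.1 hx
    exact hc a

theorem planCost_mem_closure_range (π : List A) :
    planCost c π ∈ AddSubmonoid.closure (Set.range c) :=
  AddSubmonoid.list_sum_mem _ fun _ hx => by
    obtain ⟨a, -, rfl⟩ := List.mem_map.1 hx
    exact AddSubmonoid.subset_closure ⟨a, rfl⟩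

theorem IsPlan.mono (hGH : G ⊆ H) (h : P.IsPlan H π) : P.IsPlan G π :=
  let ⟨t, hexec, hHt⟩ := h
  ⟨t, hexec, hGH.trans hHt⟩

theorem bddBelow_planCost_image (hc : ∀ a, 0 ≤ c a) (G : Set F) :
    BddBelow (planCost c '' {π | P.IsPlan G π}) :=
  ⟨0, by rintro _ ⟨π, -, rfl⟩; exact planCost_nonneg hc π⟩

theorem cstar_le_planCost (hc : ∀ a, 0 ≤ c a) (h : P.IsPlan G π) :
    P.cstar c G ≤ planCost c π :=
  csInf_le (bddBelow_planCost_image hc G) ⟨π, h, rfl⟩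

theorem cstar_mono (hc : ∀ a, 0 ≤ c a) (hGH : G ⊆ H) (hH : ∃ π, P.IsPlan H π) :
    P.cstar c G ≤ P.cstar c H :=
  let ⟨π, hπ⟩ := hH
  csInf_le_csInf (bddBelow_planCost_image hc G) ⟨_, π, hπ, rfl⟩
    (Set.image_mono fun _ => IsPlan.mono hGH)

theorem IsOptimalPlan.cstar_eq (h : P.IsOptimalPlan c G π) : P.cstar c G = planCost c π :=
  IsLeast.csInf_eq ⟨⟨π, h.1, rfl⟩, by rintro _ ⟨ρ, hρ, rfl⟩; exact h.2 ρ hρ⟩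

theorem isOptimalPlan_of_planCost_le_cstar (hc : ∀ a, 0 ≤ c a) (h : P.IsPlan G π)
    (hle : planCost c π ≤ P.cstar c G) : P.IsOptimalPlan c G π :=
  ⟨h, fun _ hρ => hle.trans (cstar_le_planCost hc hρ)⟩

/-- Plan costs lie in the additive monoid generated by the finitely many action costs,
which is well-founded because these costs are nonnegative. -/
theorem exists_isOptimalPlan (hc : ∀ a, 0 ≤ c a) (hc_fin : (Set.range c).Finite)
    (h : ∃ π, P.IsPlan G π) : ∃ π, P.IsOptimalPlan c G π := by
  obtain ⟨π₀, hπ₀⟩ := h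
  have hwf : (planCost c '' {π | P.IsPlan G π}).IsWF :=
    ((hc_fin.isPWO.addSubmonoid_closure (by rintro _ ⟨a, rfl⟩; exact hc a)).isWF).subset
      (by rintro _ ⟨π, -, rfl⟩; exact planCost_mem_closure_range π)
  have hne : (planCost c '' {π | P.IsPlan G π}).Nonempty := ⟨_, π₀, hπ₀, rfl⟩
  obtain ⟨π, hπ, hmin⟩ := hwf.min_mem hne
  exact ⟨π, hπ, fun ρ hρ => hmin ▸ hwf.min_le hne ⟨ρ, hρ, rfl⟩⟩

theorem satisfies_iff_sublist (π O : List A) : Satisfies π O ↔ O.Sublist π := by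
  rw [List.sublist_iff_exists_fin_orderEmbedding_get_eq]
  constructor
  · rintro ⟨f, hf, hget⟩
    exact ⟨OrderEmbedding.ofStrictMono f hf, fun j => (hget j).symm⟩
  · rintro ⟨f, hf⟩
    exact ⟨f, f.strictMono, fun j => (hf j).symm⟩

variable {O : List A}

def baseAction (O : List A) : A ⊕ Fin O.length → A := Sum.elim id O.get

theorem costTransform_eq_comp :
    costTransform c O = c ∘ baseAction O := by
  funext x; cases x <;> rfl

theorem planCost_costTransform (ρ : List (A ⊕ Fin O.length)) :
    planCost (costTransform c O) ρ = planCost c (ρ.map (baseAction O)) := by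
  rw [costTransform_eq_comp, planCost_comp]

theorem map_baseAction_map_inl (π : List A) :
    (π.map Sum.inl).map (baseAction O) = π := by
  simp [List.map_map, baseAction]

theorem preimage_inl_pre_transform (x : A ⊕ Fin O.length) :
    Sum.inl ⁻¹' (P.transform O).pre x = P.pre (baseAction O x) := by
  cases x <;> ext <;> simp [transform, baseAction]

theorem preimage_inl_applyA_transform (s : Set (F ⊕ Fin O.length)) (x : A ⊕ Fin O.length) :
    Sum.inl ⁻¹' (P.transform O).applyA s x = P.applyA (Sum.inl ⁻¹' s) (baseAction O x) := by
  cases x <;> ext <;> simp [applyA, transform, baseAction]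

theorem preimage_inr_applyA_transform_inl (s : Set (F ⊕ Fin O.length)) (a : A) :
    Sum.inr ⁻¹' (P.transform O).applyA s (Sum.inl a) = Sum.inr ⁻¹' s := by
  ext; simp [applyA, transform]

theorem preimage_inr_applyA_transform_inr (s : Set (F ⊕ Fin O.length)) (j : Fin O.length) :
    Sum.inr ⁻¹' (P.transform O).applyA s (Sum.inr j) = insert j (Sum.inr ⁻¹' s) := by
  ext; simp [applyA, transform, or_comm]

theorem applyA_transform_image_inl (s : Set F) (a : A) :
    (P.transform O).applyA (Sum.inl '' s) (Sum.inl a) = Sum.inl '' P.applyA s a := by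
  simp [applyA, transform, Set.image_union, Set.image_sdiff Sum.inl_injective]

theorem Exec.map_inl {s t : Set F} {π : List A} (h : P.Exec s π t) :
    (P.transform O).Exec (Sum.inl '' s) (π.map Sum.inl) (Sum.inl '' t) := by
  induction h with
  | nil s => exact .nil _
  | cons hpre _ ih =>
    exact .cons (Set.image_mono hpre) (applyA_transform_image_inl (O := O) _ _ ▸ ih)

theorem Exec.map_baseAction {s t : Set (F ⊕ Fin O.length)} {ρ : List (A ⊕ Fin O.length)}
    (h : (P.transform O).Exec s ρ t) :
    P.Exec (Sum.inl ⁻¹' s) (ρ.map (baseAction O)) (Sum.inl ⁻¹' t) := by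
  induction h with
  | nil s => exact .nil _
  | cons hpre _ ih =>
    refine .cons ?_ (preimage_inl_applyA_transform _ _ ▸ ih)
    rw [← preimage_inl_pre_transform]
    exact Set.preimage_mono hpre

theorem IsPlan.map_inl {π : List A} (h : P.IsPlan G π) :
    (P.transform O).IsPlan (Sum.inl '' G) (π.map Sum.inl) :=
  let ⟨_, hexec, hGt⟩ := h
  ⟨_, hexec.map_inl, Set.image_mono hGt⟩

theorem IsPlan.map_baseAction {ρ : List (A ⊕ Fin O.length)}
    (h : (P.transform O).IsPlan (Sum.inl '' G) ρ) : P.IsPlan G (ρ.map (baseAction O)) := by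
  obtain ⟨t, hexec, hGt⟩ := h
  have := hexec.map_baseAction
  rw [show (P.transform O).I = Sum.inl '' P.I from rfl,
    Set.preimage_image_eq _ Sum.inl_injective] at this
  exact ⟨_, this, Set.image_subset_iff.1 hGt⟩

theorem image_planCost_transform_inl :
    planCost (costTransform c O) '' {ρ | (P.transform O).IsPlan (Sum.inl '' G) ρ} =
      planCost c '' {π | P.IsPlan G π} := by
  apply Set.Subset.antisymm
  · rintro _ ⟨ρ, hρ, rfl⟩
    exact ⟨_, hρ.map_baseAction, (planCost_costTransform ρ).symm⟩
  · rintro _ ⟨π, hπ, rfl⟩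
    exact ⟨_, hπ.map_inl, by rw [planCost_costTransform, map_baseAction_map_inl]⟩

theorem cstar_transform_inl :
    (P.transform O).cstar (costTransform c O) (Sum.inl '' G) = P.cstar c G :=
  congrArg sInf image_planCost_transform_inl

theorem Exec.exists_lift {s t : Set F} {π : List A} (h : P.Exec s π t) (k : ℕ)
    (hk : (O.drop k).Sublist π) (s' : Set (F ⊕ Fin O.length)) (hs' : Sum.inl ⁻¹' s' = s)
    (hlt : ∀ j : Fin O.length, (j : ℕ) < k → Sum.inr j ∈ s') :
    ∃ ρ t', (P.transform O).Exec s' ρ t' ∧ ρ.map (baseAction O) = π ∧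
      Sum.inl ⁻¹' t' = t ∧ ∀ j, Sum.inr j ∈ t' := by
  induction h generalizing k s' with
  | nil s =>
    have hlen : O.length ≤ k := List.drop_eq_nil_iff.1 (List.sublist_nil.1 hk)
    exact ⟨[], s', .nil _, rfl, hs', fun j => hlt j (j.isLt.trans_le hlen)⟩
  | @cons s t a π hpre _ ih =>
    rcases List.sublist_cons_iff.1 hk with hk | ⟨r, hdrop, hr⟩
    · obtain ⟨ρ, t', hexec, hmap, ht', hall⟩ :=
        ih k hk ((P.transform O).applyA s' (.inl a))
          (by rw [preimage_inl_applyA_transform, hs']; rfl)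
          (fun j hj => by
            rw [← Set.mem_preimage, preimage_inr_applyA_transform_inl]
            exact hlt j hj)
      refine ⟨.inl a :: ρ, t', .cons ?_ hexec, by rw [List.map_cons, hmap]; rfl, ht', hall⟩
      exact Set.image_subset_iff.2 (hs' ▸ hpre)
    · have hk_lt : k < O.length := by
        by_contra! hle
        simp [List.drop_eq_nil_of_le hle] at hdrop
      rw [List.drop_eq_getElem_cons hk_lt] at hdrop
      obtain ⟨rfl, rfl⟩ := List.cons.inj hdrop
      obtain ⟨ρ, t', hexec, hmap, ht', hall⟩ :=
        ih (k + 1) hr ((P.transform O).applyA s' (.inr ⟨k, hk_lt⟩))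
          (by rw [preimage_inl_applyA_transform, hs']; rfl)
          (fun j hj => by
            rw [← Set.mem_preimage, preimage_inr_applyA_transform_inr]
            rcases (Nat.lt_succ_iff.1 hj).lt_or_eq with hj | hj
            · exact Or.inr (hlt j hj)
            · exact Or.inl (Fin.ext hj))
      refine ⟨.inr ⟨k, hk_lt⟩ :: ρ, t', .cons ?_ hexec, by rw [List.map_cons, hmap]; rfl, ht', hall⟩
      rintro _ (⟨p, hp, rfl⟩ | ⟨hpos, rfl⟩)
      · rw [← Set.mem_preimage, hs']
        exact hpre hp
      · exact hlt _ (Nat.sub_lt hpos Nat.one_pos)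

theorem Exec.drop_sublist_map_baseAction {s t : Set (F ⊕ Fin O.length)}
    {ρ : List (A ⊕ Fin O.length)} (h : (P.transform O).Exec s ρ t) (k : ℕ)
    (hs : ∀ j : Fin O.length, Sum.inr j ∈ s → (j : ℕ) < k) (ht : ∀ j, Sum.inr j ∈ t) :
    (O.drop k).Sublist (ρ.map (baseAction O)) := by
  induction h generalizing k with
  | nil s =>
    have hlen : O.length ≤ k := by
      by_contra! hlt
      exact (hs ⟨k, hlt⟩ (ht _)).false
    simp [List.drop_eq_nil_of_le hlen]
  | @cons s t x ρ hpre _ ih =>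
    cases x with
    | inl a =>
      refine (ih k (fun j hj => hs j ?_) ht).cons _
      rwa [← Set.mem_preimage, preimage_inr_applyA_transform_inl] at hj
    | inr K =>
      have hK : (K : ℕ) ≤ k := by
        rcases Nat.eq_zero_or_pos K with h0 | h0
        · omega
        · have := hs _ (hpre (Or.inr ⟨h0, rfl⟩))
          simp only at this
          omega
      have hmem : ∀ j, Sum.inr j ∈ (P.transform O).applyA s (.inr K) → j = K ∨ Sum.inr j ∈ s := by
        intro j hj
        rwa [← Set.mem_preimage, preimage_inr_applyA_transform_inr] at hj
      rcases hK.lt_or_eq with hlt | rfl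
      · exact (ih k (fun j hj => (hmem j hj).elim (· ▸ hlt) (hs j)) ht).cons _
      · rw [List.drop_eq_getElem_cons K.isLt]
        refine (ih (K + 1) (fun j hj => ?_) ht).cons_cons _
        rcases hmem j hj with rfl | hj
        · exact Nat.lt_succ_self _
        · exact Nat.lt_succ_of_lt (hs j hj)

theorem IsPlan.exists_lift {π : List A} (h : P.IsPlan G π) (hO : O.Sublist π) :
    ∃ ρ, (P.transform O).IsPlan (goalTransform O G) ρ ∧ ρ.map (baseAction O) = π := by
  obtain ⟨t, hexec, hGt⟩ := h
  obtain ⟨ρ, t', hexec', hmap, ht', hall⟩ :=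
    hexec.exists_lift 0 hO (Sum.inl '' P.I) (Set.preimage_image_eq _ Sum.inl_injective)
      (fun j hj => absurd hj j.val.not_lt_zero)
  refine ⟨ρ, ⟨t', hexec', Set.union_subset (Set.image_subset_iff.2 (ht' ▸ hGt)) ?_⟩, hmap⟩
  rintro _ ⟨j, rfl⟩
  exact hall j

theorem IsPlan.sublist_map_baseAction {ρ : List (A ⊕ Fin O.length)}
    (h : (P.transform O).IsPlan (goalTransform O G) ρ) : O.Sublist (ρ.map (baseAction O)) := by
  obtain ⟨t, hexec, hGt⟩ := h
  simpa using hexec.drop_sublist_map_baseAction 0 (by simp [transform])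
    (fun j => hGt (Or.inr ⟨j, rfl⟩))

end Strips

theorem goal_in_optimal_set_iff_equal_cstar_general
    {F A : Type} [Finite A]
    (P : Strips F A) (O : List A)
    (c : A → ℝ) (hc : ∀ a, 0 ≤ c a)
    (G : Set F) :
    (∃ π, P.IsOptimalPlan c G π ∧ Strips.Satisfies π O) ↔
      ((∃ π', (P.transform O).IsPlan (goalTransform O G) π') ∧
       (P.transform O).cstar (costTransform c O) (Sum.inl '' G) =
         (P.transform O).cstar (costTransform c O) (goalTransform O G)) := by
  have hc' : ∀ x, 0 ≤ costTransform c O x := by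
    rw [Strips.costTransform_eq_comp]
    exact fun x => hc _
  have hG' : Sum.inl '' G ⊆ goalTransform O G := Set.subset_union_left
  constructor
  · rintro ⟨π, hπ, hsat⟩
    obtain ⟨ρ, hρ, hmap⟩ := hπ.1.exists_lift ((Strips.satisfies_iff_sublist π O).1 hsat)
    refine ⟨⟨ρ, hρ⟩, le_antisymm (Strips.cstar_mono hc' hG' ⟨ρ, hρ⟩) ?_⟩
    calc (P.transform O).cstar (costTransform c O) (goalTransform O G)
        ≤ Strips.planCost (costTransform c O) ρ := Strips.cstar_le_planCost hc' hρ
      _ = (P.transform O).cstar (costTransform c O) (Sum.inl '' G) := by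
        rw [Strips.planCost_costTransform, hmap, ← hπ.cstar_eq, Strips.cstar_transform_inl]
  · rintro ⟨hsolv, hcstar⟩
    obtain ⟨ρ, hρ⟩ := Strips.exists_isOptimalPlan hc' (Set.finite_range _) hsolv
    refine ⟨ρ.map (Strips.baseAction O), Strips.isOptimalPlan_of_planCost_le_cstar hc
      (hρ.1.mono hG').map_baseAction ?_, (Strips.satisfies_iff_sublist _ O).2
      hρ.1.sublist_map_baseAction⟩
    rw [← Strips.planCost_costTransform, ← hρ.cstar_eq, ← hcstar, Strips.cstar_transform_inl]

/-- Theorem 2: let `T = ⟨P, 𝒢, O⟩` be a plan-recognition theory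
with `O` pairwise distinct, `P' = P.transform O` the transformed domain with
cost `c(o_a) = c(a)`, and `G ∈ 𝒢` solvable in `P`.  Then `G` belongs to the
optimal goal set `𝒢*_T` (some optimal plan for `G` in `P` satisfies `O`) iff
`G' = G ∪ F_o` is solvable in `P'` and `c*_{P'}(G) = c*_{P'}(G')`. -/
theorem goal_in_optimal_set_iff_equal_cstar
    {F A : Type} [Finite F] [Finite A]
    (P : Strips F A) (𝒢 : Set (Set F)) (O : List A) (hO : O.Nodup)
    (c : A → ℝ) (hc : ∀ a, 0 ≤ c a)
    (G : Set F) (hG : G ∈ 𝒢) (hsolv : ∃ π, P.IsPlan G π) :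
    (∃ π, P.IsOptimalPlan c G π ∧ Strips.Satisfies π O) ↔
      ((∃ π', (P.transform O).IsPlan (goalTransform O G) π') ∧
       (P.transform O).cstar (costTransform c O) (Sum.inl '' G) =
         (P.transform O).cstar (costTransform c O) (goalTransform O G)) :=
  goal_in_optimal_set_iff_equal_cstar_general P O c hc G
end
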